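/- Let g ∈ SL_N(A((t))) with g ∉ SL_N(A[[t]]) and with index r(g) = 0. Then for all integers s₀ ≥ M ≥ 1, every entry of the matrix ι_1(g)⁻¹ · σ_{s₀,1}(g) − I lies in s^M · (A[u])[[s]] (here n = 1, so ι_1 identifies t with s). -/

import Mathlib

/-!
Setup for indices and residues of elements of `SL_N(A((t)))`, following
Florence–Gille, "Residues on affine grassmannians".

* `mkL` builds a Laurent series from a coefficient function (junk `0` if the support is
  not well ordered; in all uses the support is bounded below).
* `subst φ w` is the substitution map `A((t)) → B((s))`, `∑ aᵢ tⁱ ↦ ∑ φ(aᵢ) wⁱ`,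
  computed coefficientwise.
* `SigmaSet g` is the set `Σ(g)` of the paper.
-/

noncomputable section

open Polynomial HahnSeries

namespace ResidueIndex

variable {A : Type*} [CommRing A] {B : Type*} [CommRing B] {N : ℕ}

/-- Build a Laurent series from a coefficient function (junk value `0` if the support is
not partially well ordered; in all uses below the support is bounded below, so this is
the Laurent series with the given coefficients). -/
def mkL (f : ℤ → B) : LaurentSeries B :=
  letI := Classical.dec ((Function.support f).IsPWO)
  if h : (Function.support f).IsPWO then ⟨f, h⟩ else 0

/-- Total integer power in `B((s))`: the genuine `z ^ i` for `i ≥ 0`, and `(z⁻¹) ^ (-i)`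
(via `Ring.inverse`) for `i < 0`; meaningful whenever `z` is a unit. -/
def zpow' (z : LaurentSeries B) (i : ℤ) : LaurentSeries B :=
  if 0 ≤ i then z ^ i.toNat else Ring.inverse z ^ (-i).toNat

/-- The substitution map `A((t)) → B((s))` determined by the coefficient homomorphism
`φ : A → B` and `t ↦ w`: it sends `∑ aᵢ tⁱ` to `∑ φ(aᵢ) wⁱ` (computed coefficientwise). -/
def subst (φ : A →+* B) (w : LaurentSeries B) (x : LaurentSeries A) : LaurentSeries B :=
  mkL fun k => ∑ᶠ i : ℤ, φ (x.coeff i) * (zpow' w i).coeff k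

/-- `x` lies in the power series subring `B[[t]] ⊆ B((t))`. -/
def IsPS (x : LaurentSeries B) : Prop := ∀ i : ℤ, i < 0 → x.coeff i = 0

variable (A) in
/-- `ι_n : A((t)) → (A[u])((s))`: inclusion on coefficients, `t ↦ sⁿ`. -/
def iotaF (n : ℕ) : LaurentSeries A → LaurentSeries (Polynomial A) :=
  subst (Polynomial.C) (HahnSeries.single (n : ℤ) 1)

variable (A) in
/-- `σ_{m,n} : A((t)) → (A[u])((s))`: inclusion on coefficients,
`t ↦ sⁿ(1 + u sᵐ) = sⁿ + u s^{n+m}`. -/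
def sigmaF (m n : ℕ) : LaurentSeries A → LaurentSeries (Polynomial A) :=
  subst (Polynomial.C)
    (HahnSeries.single (n : ℤ) 1 + HahnSeries.single ((n : ℤ) + (m : ℤ)) Polynomial.X)

/-- The matrix `ι_n(g)⁻¹ · σ_{m,n}(g)` (the matrix inverse is the nonsingular inverse,
which is the genuine inverse since `det (ι_n(g)) = 1`). -/
def hmat (g : Matrix (Fin N) (Fin N) (LaurentSeries A)) (m n : ℕ) :
    Matrix (Fin N) (Fin N) (LaurentSeries (Polynomial A)) :=
  (g.map (iotaF A n))⁻¹ * g.map (sigmaF A m n)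

/-- `Σ(g)`: the set of positive rationals `r = m/n` (written in lowest terms) such that
all entries of `ι_n(g)⁻¹ σ_{m,n}(g)` are power series. -/
def SigmaSet (g : Matrix (Fin N) (Fin N) (LaurentSeries A)) : Set ℚ :=
  {r : ℚ | 0 < r ∧ ∀ i j, IsPS (hmat g r.num.toNat r.den i j)}

variable (A) in
/-- `ι : A((t)) → (A[λ,λ⁻¹])((t))`: inclusion on coefficients, `t ↦ t`. -/
def iotaL : LaurentSeries A → LaurentSeries (LaurentPolynomial A) :=
  subst (LaurentPolynomial.C) (HahnSeries.single (1 : ℤ) 1)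

variable (A) in
/-- `σ₀ : A((t)) → (A[λ,λ⁻¹])((t))`: inclusion on coefficients, `t ↦ λt`. -/
def sigmaL : LaurentSeries A → LaurentSeries (LaurentPolynomial A) :=
  subst (LaurentPolynomial.C) (HahnSeries.single (1 : ℤ) (LaurentPolynomial.T 1))

/-- The matrix `ι(g)⁻¹ · σ₀(g)`. -/
def lmat (g : Matrix (Fin N) (Fin N) (LaurentSeries A)) :
    Matrix (Fin N) (Fin N) (LaurentSeries (LaurentPolynomial A)) :=
  (g.map (iotaL A))⁻¹ * g.map (sigmaL A)

/-- The coefficientwise base change `A((t)) → B((t))` along `φ : A → B` (`t ↦ t`). -/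
def baseF (φ : A →+* B) : LaurentSeries A → LaurentSeries B :=
  subst φ (HahnSeries.single (1 : ℤ) 1)

variable (A) in
/-- `φ_d : A((t)) → A((t))`, fixing `A` and sending `t` to `t^d`. -/
def phiD (d : ℕ) : LaurentSeries A → LaurentSeries A :=
  subst (RingHom.id A) (HahnSeries.single (d : ℤ) 1)

/-- Constant term (evaluation at `t = 0`) applied entrywise to a matrix of Laurent
series; this is the map `j` when the entries are power series. -/
def jmat (M : Matrix (Fin N) (Fin N) (LaurentSeries B)) : Matrix (Fin N) (Fin N) B :=
  Matrix.of fun i j => (M i j).coeff 0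

/-- The matrix `ι_n(g)⁻¹ · σ_f(g)` for a general substitution `σ_f : t ↦ f`,
`f ∈ (A[u])[[s]]`. -/
def hmatF (g : Matrix (Fin N) (Fin N) (LaurentSeries A)) (n : ℕ)
    (f : PowerSeries (Polynomial A)) :
    Matrix (Fin N) (Fin N) (LaurentSeries (Polynomial A)) :=
  (g.map (iotaF A n))⁻¹ *
    g.map (subst Polynomial.C ((HahnSeries.ofPowerSeries ℤ (Polynomial A)) f))

variable (N) in
/-- Membership in the closed subgroup scheme `G ⊆ SL_N` cut out by the set `S` of
polynomials in the matrix entries, at the commutative `A`-algebra `B`. -/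
def Gmem (S : Set (MvPolynomial (Fin N × Fin N) A)) (B : Type*) [CommRing B] [Algebra A B]
    (M : Matrix (Fin N) (Fin N) B) : Prop :=
  M.det = 1 ∧ ∀ p ∈ S, MvPolynomial.aeval (fun q : Fin N × Fin N => M q.1 q.2) p = 0

/-- `M = M(u) ∈ SL_N(A[u])` satisfies `M(X+Y) = M(X)·M(Y)` in `SL_N(A[X,Y])`
(with `A[X,Y] = MvPolynomial (Fin 2) A`); i.e. `M` is a homomorphism `𝔾_a → SL_N`. -/
def IsAddHomMat (M : Matrix (Fin N) (Fin N) (Polynomial A)) : Prop :=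
  M.map ⇑(Polynomial.aeval (MvPolynomial.X 0 + MvPolynomial.X 1 : MvPolynomial (Fin 2) A))
    = M.map ⇑(Polynomial.aeval (MvPolynomial.X 0 : MvPolynomial (Fin 2) A))
      * M.map ⇑(Polynomial.aeval (MvPolynomial.X 1 : MvPolynomial (Fin 2) A))

/-- The `A`-algebra map `A[λ,λ⁻¹] → D` sending `λ` to the unit `u`. -/
def lpHom {D : Type*} [CommRing D] [Algebra A D] (u : Dˣ) : LaurentPolynomial A →ₐ[A] D :=
  (AddMonoidAlgebra.lift A D ℤ) ((Units.coeHom D).comp (zpowersHom Dˣ u))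

variable (A) in
/-- The unit `λ` of `A[λ^{±1}, μ^{±1}] = (A[μ,μ⁻¹])[λ,λ⁻¹]`. -/
def unitLam : (LaurentPolynomial (LaurentPolynomial A))ˣ :=
  (LaurentPolynomial.isUnit_T 1).unit

variable (A) in
/-- The unit `μ` of `A[λ^{±1}, μ^{±1}] = (A[μ,μ⁻¹])[λ,λ⁻¹]`. -/
def unitMu : (LaurentPolynomial (LaurentPolynomial A))ˣ :=
  Units.map (LaurentPolynomial.C (R := LaurentPolynomial A)).toMonoidHom
    (LaurentPolynomial.isUnit_T 1).unit

/-- `M = M(λ) ∈ SL_N(A[λ,λ⁻¹])` satisfies `M(λμ) = M(λ)·M(μ)` in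
`SL_N(A[λ^{±1},μ^{±1}])`; i.e. `M` is a homomorphism `𝔾_m → SL_N`. -/
def IsMulHomMat (M : Matrix (Fin N) (Fin N) (LaurentPolynomial A)) : Prop :=
  M.map ⇑(lpHom (unitLam A * unitMu A))
    = M.map ⇑(lpHom (unitLam A)) * M.map ⇑(lpHom (unitMu A))

/-- Composition (substitution) of formal power series: `pcomp f h = f ∘ h`, the series
obtained by substituting `h` for `t` in `f`; meaningful when `h` has zero constant
coefficient. -/
def pcomp (f h : PowerSeries B) : PowerSeries B :=
  PowerSeries.mk fun k =>
    ∑ i ∈ Finset.range (k + 1), PowerSeries.coeff (R := B) i f * PowerSeries.coeff (R := B) k (h ^ i)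

variable (B) in
/-- `J^w(B) = {f ∈ B[[t]] : f ≡ t (mod t^{w+1})}`. -/
def Jset (w : ℕ) : Set (PowerSeries B) :=
  {f | ∀ k : ℕ, k ≤ w → PowerSeries.coeff (R := B) k f = PowerSeries.coeff (R := B) k PowerSeries.X}

section Aux

lemma bddBelow_of_isPWO {s : Set ℤ} (h : s.IsPWO) : BddBelow s := by
  rcases s.eq_empty_or_nonempty with rfl | hne
  · exact bddBelow_empty
  · have hwf : s.IsWF := h.isWF
    exact ⟨hwf.min hne, fun x hx => hwf.min_le hne hx⟩

lemma mkL_coeff {f : ℤ → B} (h : BddBelow (Function.support f)) (k : ℤ) :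
    (mkL f).coeff k = f k := by
  rw [mkL]
  rw [dif_pos (HahnSeries.suppBddBelow_supp_PWO f h)]

lemma single_zero_one : (single (0:ℤ) (1:B)) = 1 := rfl

def snUnit (n : ℕ) : (LaurentSeries B)ˣ where
  val := single (n:ℤ) 1
  inv := single (-(n:ℤ)) 1
  val_inv := by rw [single_mul_single, add_neg_cancel, mul_one, single_zero_one]
  inv_val := by rw [single_mul_single, neg_add_cancel, mul_one, single_zero_one]

lemma snUnit_zpow (n : ℕ) (i : ℤ) :
    ((snUnit (B := B) n ^ i : (LaurentSeries B)ˣ) : LaurentSeries B) = single ((n:ℤ)*i) 1 := by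
  rcases Int.eq_nat_or_neg i with ⟨j, rfl | rfl⟩
  · rw [zpow_natCast, Units.val_pow_eq_pow_val]
    show (single ((n:ℤ)) (1:B))^j = _
    rw [single_pow, one_pow, nsmul_eq_mul]
    norm_num [mul_comm]
  · rw [zpow_neg, zpow_natCast, ← inv_pow, Units.val_pow_eq_pow_val]
    show (single (-(n:ℤ)) (1:B))^j = _
    rw [single_pow, one_pow, nsmul_eq_mul]
    ring_nf

lemma zpow'_unit (U : (LaurentSeries B)ˣ) (i : ℤ) :
    zpow' (U : LaurentSeries B) i = ((U ^ i : (LaurentSeries B)ˣ) : LaurentSeries B) := by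
  rw [zpow']
  split_ifs with h
  · rw [← Units.val_pow_eq_pow_val, ← zpow_natCast, Int.toNat_of_nonneg h]
  · rw [Ring.inverse_unit, ← Units.val_pow_eq_pow_val, inv_pow, ← zpow_natCast,
      Int.toNat_of_nonneg (by omega : (0:ℤ) ≤ -i), ← zpow_neg, neg_neg]

lemma zpow'_sn (n : ℕ) (i : ℤ) : zpow' (single (n:ℤ) (1:B)) i = single ((n:ℤ)*i) 1 := by
  have h : (single ((n:ℤ)) (1:B)) = ↑(snUnit (B:=B) n) := rfl
  rw [h, zpow'_unit, snUnit_zpow]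

/-- the inverse of `1 + X s^m` -/
def geom (m : ℕ) : LaurentSeries (Polynomial A) :=
  HahnSeries.ofSuppBddBelow
    (fun e => if (m:ℤ) ∣ e ∧ 0 ≤ e then (-Polynomial.X : Polynomial A)^((e / (m:ℤ)).toNat) else 0)
    (HahnSeries.forallLTEqZero_supp_BddBelow _ 0 (fun e he => by
      rw [if_neg (fun hc => absurd hc.2 (not_le.mpr he))]))

lemma geom_coeff (m : ℕ) (e : ℤ) :
    (geom (A := A) m).coeff e
      = if (m:ℤ) ∣ e ∧ 0 ≤ e then (-Polynomial.X : Polynomial A)^((e / (m:ℤ)).toNat) else 0 :=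
  HahnSeries.ofSuppBddBelow_coeff _ _ e

def u0 (m : ℕ) : LaurentSeries (Polynomial A) := 1 + single (m:ℤ) Polynomial.X

lemma u0_mul_geom {m : ℕ} (hm : 1 ≤ m) : (u0 (A := A) m) * geom m = 1 := by
  have hm' : (0:ℤ) < (m:ℤ) := by exact_mod_cast hm
  ext k
  rw [u0, add_mul, one_mul, HahnSeries.coeff_add]
  have hsm : (single ((m:ℤ)) Polynomial.X * geom (A := A) m).coeff k
      = Polynomial.X * (geom (A := A) m).coeff (k - m) := by
    have h := HahnSeries.coeff_single_mul_add (r := (Polynomial.X : Polynomial A))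
      (x := geom (A := A) m) (a := k - (m:ℤ)) (b := (m:ℤ))
    rwa [sub_add_cancel] at h
  rw [hsm, geom_coeff, geom_coeff, HahnSeries.coeff_one]
  by_cases h0 : k = 0
  · subst h0
    rw [if_pos ⟨dvd_zero _, le_refl (0:ℤ)⟩, if_neg (fun hc => absurd hc.2 (by omega)), if_pos rfl]
    simp
  · rw [if_neg h0]
    by_cases hdvd : (m:ℤ) ∣ k ∧ 0 ≤ k
    · obtain ⟨⟨q, rfl⟩, hge⟩ := hdvd
      have hq : 1 ≤ q := by
        by_contra hq
        push_neg at hq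
        have hq0 : q ≠ 0 := fun h => h0 (by rw [h, mul_zero])
        have : q ≤ -1 := by omega
        nlinarith
      rw [if_pos ⟨Dvd.intro q rfl, hge⟩]
      have hd2 : (m:ℤ) ∣ ((m:ℤ)*q - m) := ⟨q - 1, by ring⟩
      have hge2 : (0:ℤ) ≤ (m:ℤ)*q - m := by nlinarith
      rw [if_pos ⟨hd2, hge2⟩]
      have hq1 : ((m:ℤ) * q / m) = q := Int.mul_ediv_cancel_left q (ne_of_gt hm')
      have hq2 : (((m:ℤ)*q - m) / m) = q - 1 := by
        rw [show (m:ℤ)*q - m = m * (q-1) by ring, Int.mul_ediv_cancel_left _ (ne_of_gt hm')]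
      rw [hq1, hq2, show q.toNat = (q-1).toNat + 1 by omega, pow_succ]
      ring_nf
    · rw [if_neg hdvd, if_neg, mul_zero, add_zero]
      rintro ⟨hc1, hc2⟩
      refine hdvd ⟨?_, by omega⟩
      have := dvd_add hc1 (dvd_refl (m:ℤ))
      rwa [sub_add_cancel] at this

def u0Unit (m : ℕ) (hm : 1 ≤ m) : (LaurentSeries (Polynomial A))ˣ :=
  ⟨u0 m, geom m, u0_mul_geom hm, by rw [mul_comm]; exact u0_mul_geom hm⟩

/-- The lattice-support property for series in `(A[u])((s))`. -/
def Pp (m : ℕ) (z : LaurentSeries (Polynomial A)) : Prop :=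
  ∀ (e : ℤ) (d : ℕ), (z.coeff e).coeff d ≠ 0 → e = (m:ℤ) * d

lemma Pp_one (m : ℕ) : Pp (A := A) m 1 := by
  intro e d h
  rw [HahnSeries.coeff_one] at h
  split_ifs at h with he
  · subst he
    rw [Polynomial.coeff_one] at h
    split_ifs at h with hd
    · subst hd; simp
    · simp at h
  · simp at h

lemma Pp_mul {m : ℕ} {z w : LaurentSeries (Polynomial A)} (hz : Pp m z) (hw : Pp m w) :
    Pp m (z * w) := by
  intro e d h
  rw [HahnSeries.coeff_mul, Polynomial.finset_sum_coeff] at h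
  obtain ⟨⟨p, q⟩, hmem, hne⟩ := Finset.exists_ne_zero_of_sum_ne_zero h
  rw [Finset.mem_addAntidiagonal] at hmem
  rw [Polynomial.coeff_mul] at hne
  obtain ⟨⟨d1, d2⟩, hd, hne2⟩ := Finset.exists_ne_zero_of_sum_ne_zero hne
  rw [Finset.HasAntidiagonal.mem_antidiagonal] at hd
  have h1 := hz p d1 (left_ne_zero_of_mul hne2)
  have h2 := hw q d2 (right_ne_zero_of_mul hne2)
  have he : p + q = e := hmem.2.2
  subst h1 h2 hd
  rw [← he]
  push_cast
  ring

lemma Pp_pow {m : ℕ} {z : LaurentSeries (Polynomial A)} (hz : Pp m z) (j : ℕ) :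
    Pp m (z ^ j) := by
  induction j with
  | zero => simpa using Pp_one m
  | succ j ih => rw [pow_succ]; exact Pp_mul ih hz

lemma Pp_u0 {m : ℕ} (hm : 1 ≤ m) : Pp (A := A) m (u0 m) := by
  intro e d h
  rw [u0, HahnSeries.coeff_add, HahnSeries.coeff_one, HahnSeries.coeff_single] at h
  by_cases he : e = 0
  · subst he
    rw [if_pos rfl, if_neg (by exact_mod_cast (by omega : (0:ℤ) ≠ (m:ℤ)))] at h
    have hd : d = 0 := by
      by_contra hd
      rw [add_zero, Polynomial.coeff_one, if_neg hd] at h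
      exact h rfl
    simp [hd]
  · rw [if_neg he, zero_add] at h
    split_ifs at h with hem
    · subst hem
      have : d = 1 := by
        by_contra hd
        rw [Polynomial.coeff_X, if_neg (fun hh => hd hh.symm)] at h
        exact h rfl
      subst this; simp
    · simp at h

lemma Pp_geom {m : ℕ} (hm : 1 ≤ m) : Pp (A := A) m (geom m) := by
  intro e d h
  rw [geom_coeff] at h
  split_ifs at h with hc
  · obtain ⟨⟨c, rfl⟩, hge⟩ := hc
    have hc0 : 0 ≤ c := by nlinarith [show (0:ℤ) < (m:ℤ) from by exact_mod_cast hm]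
    have hq : ((m:ℤ) * c / m) = c := Int.mul_ediv_cancel_left c
      (ne_of_gt (by exact_mod_cast hm : (0:ℤ) < (m:ℤ)))
    rw [hq] at h
    have hcast : ((-Polynomial.X : Polynomial A)) ^ c.toNat
        = Polynomial.C ((-1 : A) ^ c.toNat) * Polynomial.X ^ c.toNat := by
      rw [neg_pow]
      congr 1
      rw [map_pow, map_neg, map_one]
    rw [hcast, Polynomial.coeff_C_mul, Polynomial.coeff_X_pow] at h
    have : d = c.toNat := by
      by_contra hd
      rw [if_neg hd, mul_zero] at h
      exact h rfl
    subst this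
    rw [Int.toNat_of_nonneg hc0]
  · simp at h

lemma u0Unit_zpow_val (m : ℕ) (hm : 1 ≤ m) (i : ℤ) :
    ((u0Unit (A := A) m hm ^ i : (LaurentSeries (Polynomial A))ˣ) : LaurentSeries (Polynomial A))
      = if 0 ≤ i then (u0 (A := A) m) ^ i.toNat else (geom (A := A) m) ^ (-i).toNat := by
  rw [← zpow'_unit]
  rw [zpow']
  split_ifs with h
  · rfl
  · congr 1
    exact Ring.inverse_unit (u0Unit (A := A) m hm)

lemma Pp_V (m : ℕ) (hm : 1 ≤ m) (i : ℤ) :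
    Pp m ((u0Unit (A := A) m hm ^ i : (LaurentSeries (Polynomial A))ˣ) :
      LaurentSeries (Polynomial A)) := by
  rw [u0Unit_zpow_val]
  split_ifs with h
  · exact Pp_pow (Pp_u0 hm) _
  · exact Pp_pow (Pp_geom hm) _

lemma Pp_nonneg {m : ℕ} {z : LaurentSeries (Polynomial A)} (h : Pp m z) {e : ℤ}
    (he : z.coeff e ≠ 0) : 0 ≤ e := by
  have : ∃ d, (z.coeff e).coeff d ≠ 0 := by
    by_contra hc
    push_neg at hc
    exact he (Polynomial.ext fun d => hc d)
  obtain ⟨d, hd⟩ := this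
  rw [h e d hd]
  positivity

/-- coefficient at 0 of a product of nonneg-supported series -/
lemma mul_coeff_zero_nonneg {z w : LaurentSeries (Polynomial A)}
    (hz : ∀ e : ℤ, e < 0 → z.coeff e = 0) (hw : ∀ e : ℤ, e < 0 → w.coeff e = 0) :
    (z * w).coeff 0 = z.coeff 0 * w.coeff 0 := by
  rw [HahnSeries.coeff_mul]
  rcases eq_or_ne (z.coeff 0 * w.coeff 0) 0 with h0 | h0
  · rw [h0]
    apply Finset.sum_eq_zero
    rintro ⟨p, q⟩ hmem
    rw [Finset.mem_addAntidiagonal] at hmem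
    obtain ⟨hp, hq, hpq⟩ := hmem
    have hp0 : 0 ≤ p := le_of_not_gt fun hlt => hp (hz p hlt)
    have hq0 : 0 ≤ q := le_of_not_gt fun hlt => hq (hw q hlt)
    have : p = 0 ∧ q = 0 := by omega
    rw [this.1, this.2]
    exact h0
  · rw [Finset.sum_eq_single ((0 : ℤ), (0 : ℤ))]
    · rintro ⟨p, q⟩ hmem hne
      rw [Finset.mem_addAntidiagonal] at hmem
      obtain ⟨hp, hq, hpq⟩ := hmem
      have hp0 : 0 ≤ p := le_of_not_gt fun hlt => hp (hz p hlt)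
      have hq0 : 0 ≤ q := le_of_not_gt fun hlt => hq (hw q hlt)
      exact absurd (Prod.ext (by omega) (by omega)) hne
    · intro hnot
      exfalso
      apply hnot
      rw [Finset.mem_addAntidiagonal]
      exact ⟨fun hh => h0 (by rw [hh, zero_mul]), fun hh => h0 (by rw [hh, mul_zero]),
        add_zero 0⟩

lemma coeff_zero_V (m : ℕ) (hm : 1 ≤ m) (i : ℤ) :
    ((u0Unit (A := A) m hm ^ i : (LaurentSeries (Polynomial A))ˣ) :
      LaurentSeries (Polynomial A)).coeff 0 = 1 := by
  rw [u0Unit_zpow_val]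
  have key : ∀ (z : LaurentSeries (Polynomial A)), Pp m z → z.coeff 0 = 1 →
      ∀ j : ℕ, (z ^ j).coeff 0 = 1 := by
    intro z hPp hz0 j
    induction j with
    | zero => simp [HahnSeries.coeff_one]
    | succ j ih =>
      rw [pow_succ, mul_coeff_zero_nonneg
          (fun e he => by
            by_contra hc
            exact absurd (Pp_nonneg (Pp_pow hPp j) hc) (not_le.mpr he))
          (fun e he => by
            by_contra hc
            exact absurd (Pp_nonneg hPp hc) (not_le.mpr he)),
        ih, hz0, one_mul]
  have hu00 : (u0 (A := A) m).coeff 0 = 1 := by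
    rw [u0, HahnSeries.coeff_add, HahnSeries.coeff_one, if_pos rfl, HahnSeries.coeff_single,
      if_neg (by exact_mod_cast (by omega : (0:ℤ) ≠ (m:ℤ))), add_zero]
  have hg0 : (geom (A := A) m).coeff 0 = 1 := by
    rw [geom_coeff, if_pos ⟨dvd_zero _, le_refl _⟩]
    norm_num
  split_ifs with h
  · exact key _ (Pp_u0 hm) hu00 _
  · exact key _ (Pp_geom hm) hg0 _

def mulmHom (n : ℕ) : ℤ →+ ℤ where
  toFun := fun a => (n:ℤ) * a
  map_zero' := mul_zero _
  map_add' := fun a b => mul_add _ a b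

lemma mulmHom_inj {n : ℕ} (hn : 1 ≤ n) : Function.Injective (mulmHom n) := by
  intro a b h
  have hn0 : ((n:ℤ)) ≠ 0 := Int.natCast_ne_zero.mpr (by omega)
  exact mul_left_cancel₀ hn0 h

lemma mulmHom_mono {n : ℕ} (hn : 1 ≤ n) :
    ∀ a b : ℤ, mulmHom n a ≤ mulmHom n b ↔ a ≤ b := by
  intro a b
  have hn' : (0:ℤ) < (n:ℤ) := by exact_mod_cast hn
  exact ⟨fun h => le_of_mul_le_mul_left h hn', fun h => mul_le_mul_of_nonneg_left h hn'.le⟩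

/-- `s ↦ s^m` on `(A[u])((s))`. -/
def PhiRH (m : ℕ) (hm : 1 ≤ m) :
    LaurentSeries (Polynomial A) →+* LaurentSeries (Polynomial A) :=
  HahnSeries.embDomainRingHom (mulmHom m) (mulmHom_inj hm) (mulmHom_mono hm)

lemma PhiRH_u0Unit (m : ℕ) (hm : 1 ≤ m) :
    Units.map (PhiRH (A := A) m hm).toMonoidHom (u0Unit 1 le_rfl) = u0Unit m hm := by
  apply Units.ext
  show PhiRH (A := A) m hm (u0 1) = u0 m
  rw [u0, u0, map_add, map_one]
  congr 1
  show HahnSeries.embDomain _ (single (1:ℤ) Polynomial.X) = _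
  rw [HahnSeries.embDomain_single]
  show single ((m:ℤ) * 1) Polynomial.X = single ((m:ℤ)) Polynomial.X
  rw [mul_one]

lemma V_transfer (m : ℕ) (hm : 1 ≤ m) (i : ℤ) (d : ℕ) :
    ((u0Unit (A := A) m hm ^ i : (LaurentSeries (Polynomial A))ˣ) :
        LaurentSeries (Polynomial A)).coeff ((m:ℤ) * d)
      = ((u0Unit (A := A) 1 le_rfl ^ i : (LaurentSeries (Polynomial A))ˣ) :
        LaurentSeries (Polynomial A)).coeff (d:ℤ) := by
  have hU : u0Unit (A := A) m hm ^ i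
      = Units.map (PhiRH (A := A) m hm).toMonoidHom (u0Unit 1 le_rfl ^ i) := by
    rw [map_zpow, PhiRH_u0Unit]
  rw [hU]
  have hval : ((Units.map (PhiRH (A := A) m hm).toMonoidHom (u0Unit 1 le_rfl ^ i) :
      (LaurentSeries (Polynomial A))ˣ) : LaurentSeries (Polynomial A))
      = PhiRH (A := A) m hm ((u0Unit 1 le_rfl ^ i : (LaurentSeries (Polynomial A))ˣ) :
        LaurentSeries (Polynomial A)) := rfl
  rw [hval]
  show (HahnSeries.embDomain _ _).coeff ((m:ℤ) * d) = _
  exact HahnSeries.embDomain_coeff (a := (d:ℤ))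

/-- The universal coefficients `γ(i,d)`. -/
def gam (i : ℤ) (d : ℕ) : A :=
  (((u0Unit (A := A) 1 le_rfl ^ i : (LaurentSeries (Polynomial A))ˣ) :
    LaurentSeries (Polynomial A)).coeff (d:ℤ)).coeff d

lemma gam_zero (i : ℤ) : gam (A := A) i 0 = 1 := by
  rw [gam]
  norm_num [coeff_zero_V 1 le_rfl i]

lemma V_coeff_gam (m : ℕ) (hm : 1 ≤ m) (i : ℤ) (d : ℕ) :
    (((u0Unit (A := A) m hm ^ i : (LaurentSeries (Polynomial A))ˣ) :
        LaurentSeries (Polynomial A)).coeff ((m:ℤ) * d)).coeff d = gam (A := A) i d := by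
  rw [V_transfer, gam]

/-- The "Hasse-derivative"-type operator `D_d`. -/
def Dmap (d : ℕ) (y : LaurentSeries A) : LaurentSeries A :=
  ⟨fun e => y.coeff e * gam (A := A) e d, y.isPWO_support.mono (fun e he => by
    simp only [Function.mem_support] at he ⊢
    exact fun h0 => he (by rw [h0, zero_mul]))⟩

lemma Dmap_coeff (d : ℕ) (y : LaurentSeries A) (e : ℤ) :
    (Dmap d y).coeff e = y.coeff e * gam (A := A) e d := rfl

lemma Dmap_zero_eq (y : LaurentSeries A) : Dmap 0 y = y := by
  ext e
  rw [Dmap_coeff, gam_zero, mul_one]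

/-- Coefficientwise map as a ring homomorphism. -/
def mapRH (φ : A →+* B) : LaurentSeries A →+* LaurentSeries B where
  toFun x := x.map φ
  map_zero' := by ext a; simp
  map_one' := by
    ext a
    rw [HahnSeries.map_coeff, HahnSeries.coeff_one, HahnSeries.coeff_one, apply_ite φ,
      map_one, map_zero]
  map_add' x y := by ext a; simp
  map_mul' x y := HahnSeries.map_mul φ.toNonUnitalRingHom

lemma iotaF_coeff {n : ℕ} (hn : 1 ≤ n) (x : LaurentSeries A) (k : ℤ) :
    (iotaF A n x).coeff k
      = if (n:ℤ) ∣ k then Polynomial.C (x.coeff (k / (n:ℤ))) else 0 := by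
  have hn0 : ((n:ℤ)) ≠ 0 := Int.natCast_ne_zero.mpr (by omega)
  have hfun : (fun k : ℤ => ∑ᶠ i : ℤ,
        Polynomial.C (x.coeff i) * (zpow' (single ((n:ℕ):ℤ) 1) i).coeff k)
      = fun k : ℤ => if (n:ℤ) ∣ k then Polynomial.C (x.coeff (k / (n:ℤ))) else 0 := by
    funext k
    by_cases h : (n:ℤ) ∣ k
    · rw [if_pos h, finsum_eq_single _ (k / (n:ℤ))]
      · rw [zpow'_sn, HahnSeries.coeff_single,
          if_pos (Int.mul_ediv_cancel' h).symm, mul_one]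
      · intro i hi
        rw [zpow'_sn, HahnSeries.coeff_single, if_neg, mul_zero]
        intro hk
        exact hi (by rw [hk, Int.mul_ediv_cancel_left _ hn0])
    · rw [if_neg h, finsum_eq_zero_of_forall_eq_zero]
      intro i
      rw [zpow'_sn, HahnSeries.coeff_single, if_neg, mul_zero]
      exact fun hk => h ⟨i, hk⟩
  rw [iotaF, subst, hfun]
  obtain ⟨b, hb⟩ := bddBelow_of_isPWO x.isPWO_support
  have hbdd : BddBelow (Function.support fun k : ℤ =>
      if (n:ℤ) ∣ k then Polynomial.C (x.coeff (k / (n:ℤ))) else 0) := by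
    refine HahnSeries.forallLTEqZero_supp_BddBelow _ ((n:ℤ) * b) (fun c hc => ?_)
    by_cases h : (n:ℤ) ∣ c
    · rw [if_pos h]
      by_cases hxc : x.coeff (c / (n:ℤ)) = 0
      · rw [hxc, map_zero]
      · exfalso
        have hbc : b ≤ c / (n:ℤ) := hb hxc
        have : (n:ℤ) * b ≤ (n:ℤ) * (c / (n:ℤ)) :=
          mul_le_mul_of_nonneg_left hbc (by positivity)
        rw [Int.mul_ediv_cancel' h] at this
        omega
    · rw [if_neg h]
  rw [mkL_coeff hbdd]

/-- `ι_n` as a ring homomorphism. -/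
def iotaRH (n : ℕ) (hn : 1 ≤ n) : LaurentSeries A →+* LaurentSeries (Polynomial A) :=
  (HahnSeries.embDomainRingHom (mulmHom n) (mulmHom_inj hn) (mulmHom_mono hn)).comp
    (mapRH (Polynomial.C : A →+* Polynomial A))

lemma iotaF_eq {n : ℕ} (hn : 1 ≤ n) :
    iotaF A n = ⇑(iotaRH (A := A) n hn) := by
  have hn0 : ((n:ℤ)) ≠ 0 := Int.natCast_ne_zero.mpr (by omega)
  funext x
  ext k : 2
  rw [iotaF_coeff hn]
  show _ = (HahnSeries.embDomain _ (x.map (Polynomial.C : A →+* Polynomial A))).coeff k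
  by_cases h : (n:ℤ) ∣ k
  · rw [if_pos h]
    have hk : (⟨⟨⇑(mulmHom n), mulmHom_inj hn⟩, mulmHom_mono hn _ _⟩ : ℤ ↪o ℤ) (k / (n:ℤ)) = k :=
      Int.mul_ediv_cancel' h
    conv_rhs => rw [← hk]
    exact ((HahnSeries.embDomain_coeff (a := k / (n:ℤ))).trans
      (HahnSeries.map_coeff x (Polynomial.C : A →+* Polynomial A) (k / (n:ℤ)))).symm
  · rw [if_neg h, HahnSeries.embDomain_notin_range]
    rintro ⟨a, ha⟩
    exact h ⟨a, ha.symm⟩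

lemma map_iota_inv {n : ℕ} (hn : 1 ≤ n) {g : Matrix (Fin N) (Fin N) (LaurentSeries A)}
    (hdet : g.det = 1) :
    (g.map (iotaF A n))⁻¹ = (g.adjugate).map (iotaF A n) := by
  rw [iotaF_eq hn]
  apply Matrix.inv_eq_left_inv
  rw [← Matrix.map_mul, Matrix.adjugate_mul, hdet, one_smul,
    Matrix.map_one _ (map_zero _) (map_one _)]

lemma w_eq (m n : ℕ) (hm : 1 ≤ m) :
    (single ((n:ℕ):ℤ) 1 + single (((n:ℕ):ℤ) + ((m:ℕ):ℤ)) Polynomial.X :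
        LaurentSeries (Polynomial A))
      = ((snUnit n * u0Unit (A := A) m hm : (LaurentSeries (Polynomial A))ˣ) :
          LaurentSeries (Polynomial A)) := by
  show _ = single ((n:ℕ):ℤ) 1 * u0 m
  rw [u0, mul_add, mul_one, single_mul_single, one_mul]

lemma zpow'_w (m n : ℕ) (hm : 1 ≤ m) (i : ℤ) :
    zpow' (single ((n:ℕ):ℤ) 1 + single (((n:ℕ):ℤ) + ((m:ℕ):ℤ)) Polynomial.X :
        LaurentSeries (Polynomial A)) i
      = single ((n:ℤ) * i) 1 *
        ((u0Unit (A := A) m hm ^ i : (LaurentSeries (Polynomial A))ˣ) :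
          LaurentSeries (Polynomial A)) := by
  rw [w_eq m n hm, zpow'_unit,
    mul_zpow (snUnit (B := Polynomial A) n) (u0Unit (A := A) m hm) i,
    Units.val_mul, snUnit_zpow]

lemma sigma_coeff' {m n : ℕ} (hm : 1 ≤ m) (hn : 1 ≤ n) (y : LaurentSeries A) (k : ℤ) :
    (sigmaF A m n y).coeff k = ∑ᶠ i : ℤ, Polynomial.C (y.coeff i) *
      ((u0Unit (A := A) m hm ^ i : (LaurentSeries (Polynomial A))ˣ) :
        LaurentSeries (Polynomial A)).coeff (k - (n:ℤ) * i) := by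
  have hterm : ∀ (kk i : ℤ), Polynomial.C (y.coeff i) *
      (zpow' (single ((n:ℕ):ℤ) 1 + single (((n:ℕ):ℤ) + ((m:ℕ):ℤ)) Polynomial.X :
        LaurentSeries (Polynomial A)) i).coeff kk
      = Polynomial.C (y.coeff i) *
        ((u0Unit (A := A) m hm ^ i : (LaurentSeries (Polynomial A))ˣ) :
          LaurentSeries (Polynomial A)).coeff (kk - (n:ℤ) * i) := by
    intro kk i
    rw [zpow'_w m n hm]
    congr 1
    have h := HahnSeries.coeff_single_mul_add (r := (1 : Polynomial A))
      (x := ((u0Unit (A := A) m hm ^ i : (LaurentSeries (Polynomial A))ˣ) :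
        LaurentSeries (Polynomial A))) (a := kk - (n:ℤ) * i) (b := (n:ℤ) * i)
    rw [sub_add_cancel, one_mul] at h
    exact h
  rw [sigmaF, subst]
  have hfun : (fun kk : ℤ => ∑ᶠ i : ℤ, Polynomial.C (y.coeff i) *
      (zpow' (single ((n:ℕ):ℤ) 1 + single (((n:ℕ):ℤ) + ((m:ℕ):ℤ)) Polynomial.X :
        LaurentSeries (Polynomial A)) i).coeff kk)
      = fun kk : ℤ => ∑ᶠ i : ℤ, Polynomial.C (y.coeff i) *
        ((u0Unit (A := A) m hm ^ i : (LaurentSeries (Polynomial A))ˣ) :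
          LaurentSeries (Polynomial A)).coeff (kk - (n:ℤ) * i) := by
    funext kk
    exact finsum_congr (hterm kk)
  rw [hfun]
  obtain ⟨b, hb⟩ := bddBelow_of_isPWO y.isPWO_support
  have hsupp : ∀ (kk i : ℤ), Polynomial.C (y.coeff i) *
      ((u0Unit (A := A) m hm ^ i : (LaurentSeries (Polynomial A))ˣ) :
        LaurentSeries (Polynomial A)).coeff (kk - (n:ℤ) * i) ≠ 0 →
      y.coeff i ≠ 0 ∧ (n:ℤ) * i ≤ kk := by
    intro kk i hne
    have h1 : y.coeff i ≠ 0 := by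
      intro h0
      rw [h0, map_zero, zero_mul] at hne
      exact hne rfl
    have h2 : ((u0Unit (A := A) m hm ^ i : (LaurentSeries (Polynomial A))ˣ) :
        LaurentSeries (Polynomial A)).coeff (kk - (n:ℤ) * i) ≠ 0 :=
      right_ne_zero_of_mul hne
    have := Pp_nonneg (Pp_V m hm i) h2
    exact ⟨h1, by omega⟩
  have hbdd : BddBelow (Function.support fun kk : ℤ => ∑ᶠ i : ℤ, Polynomial.C (y.coeff i) *
      ((u0Unit (A := A) m hm ^ i : (LaurentSeries (Polynomial A))ˣ) :
        LaurentSeries (Polynomial A)).coeff (kk - (n:ℤ) * i)) := by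
    refine HahnSeries.forallLTEqZero_supp_BddBelow _ ((n:ℤ) * b) (fun kk hkk => ?_)
    apply finsum_eq_zero_of_forall_eq_zero
    intro i
    by_contra hne
    obtain ⟨h1, h2⟩ := hsupp kk i hne
    have hbi : b ≤ i := hb h1
    have : (n:ℤ) * b ≤ (n:ℤ) * i := mul_le_mul_of_nonneg_left hbi (by positivity)
    omega
  rw [mkL_coeff hbdd]

lemma support_finite {m n : ℕ} (hm : 1 ≤ m) (hn : 1 ≤ n) (y : LaurentSeries A) (k : ℤ) :
    (Function.support fun i : ℤ => Polynomial.C (y.coeff i) *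
      ((u0Unit (A := A) m hm ^ i : (LaurentSeries (Polynomial A))ˣ) :
        LaurentSeries (Polynomial A)).coeff (k - (n:ℤ) * i)).Finite := by
  obtain ⟨b, hb⟩ := bddBelow_of_isPWO y.isPWO_support
  apply Set.Finite.subset (Set.finite_Icc b |k|)
  intro i hi
  rw [Function.mem_support] at hi
  have h1 : y.coeff i ≠ 0 := by
    intro h0
    rw [h0, map_zero, zero_mul] at hi
    exact hi rfl
  have h2 := Pp_nonneg (Pp_V m hm i) (right_ne_zero_of_mul hi)
  have hbi : b ≤ i := hb h1
  have hik : (n:ℤ) * i ≤ k := by omega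
  constructor
  · exact hbi
  · rcases le_or_gt 0 i with hi0 | hi0
    · have : i ≤ (n:ℤ) * i := le_mul_of_one_le_left hi0 (by exact_mod_cast hn)
      have : i ≤ k := le_trans this hik
      exact le_trans this (le_abs_self k)
    · exact le_trans hi0.le (abs_nonneg k)

lemma sigma_coeff_d {m n : ℕ} (hm : 1 ≤ m) (hn : 1 ≤ n) (y : LaurentSeries A) (k : ℤ) (d : ℕ) :
    ((sigmaF A m n y).coeff k).coeff d
      = if (n:ℤ) ∣ (k - (m:ℤ) * d) then
          y.coeff ((k - (m:ℤ) * d) / (n:ℤ)) * gam (A := A) ((k - (m:ℤ) * d) / (n:ℤ)) d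
        else 0 := by
  have hn0 : ((n:ℤ)) ≠ 0 := Int.natCast_ne_zero.mpr (by omega)
  rw [sigma_coeff' hm hn]
  have hfin : (Function.support ((fun i : ℤ => Polynomial.C (y.coeff i) *
      ((u0Unit (A := A) m hm ^ i : (LaurentSeries (Polynomial A))ˣ) :
        LaurentSeries (Polynomial A)).coeff (k - (n:ℤ) * i)) ∘ PLift.down)).Finite := by
    rw [Function.support_comp_eq_preimage]
    exact Set.Finite.preimage PLift.down_injective.injOn (support_finite hm hn y k)
  have hmap : (∑ᶠ i : ℤ, Polynomial.C (y.coeff i) *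
      ((u0Unit (A := A) m hm ^ i : (LaurentSeries (Polynomial A))ˣ) :
        LaurentSeries (Polynomial A)).coeff (k - (n:ℤ) * i)).coeff d
      = ∑ᶠ i : ℤ, (Polynomial.C (y.coeff i) *
        ((u0Unit (A := A) m hm ^ i : (LaurentSeries (Polynomial A))ˣ) :
          LaurentSeries (Polynomial A)).coeff (k - (n:ℤ) * i)).coeff d :=
    (Polynomial.lcoeff A d).toAddMonoidHom.map_finsum_plift _ hfin
  rw [hmap]
  have hterm : ∀ i : ℤ, (Polynomial.C (y.coeff i) *
      ((u0Unit (A := A) m hm ^ i : (LaurentSeries (Polynomial A))ˣ) :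
        LaurentSeries (Polynomial A)).coeff (k - (n:ℤ) * i)).coeff d
      = y.coeff i * (((u0Unit (A := A) m hm ^ i : (LaurentSeries (Polynomial A))ˣ) :
          LaurentSeries (Polynomial A)).coeff (k - (n:ℤ) * i)).coeff d := by
    intro i
    rw [Polynomial.coeff_C_mul]
  rw [finsum_congr hterm]
  by_cases h : (n:ℤ) ∣ (k - (m:ℤ) * d)
  · rw [if_pos h]
    set i0 := (k - (m:ℤ) * d) / (n:ℤ) with hi0
    have hni0 : (n:ℤ) * i0 = k - (m:ℤ) * d := Int.mul_ediv_cancel' h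
    rw [finsum_eq_single _ i0]
    · have hk : k - (n:ℤ) * i0 = (m:ℤ) * d := by omega
      rw [hk, V_coeff_gam m hm i0 d]
    · intro i hi
      rcases eq_or_ne ((((u0Unit (A := A) m hm ^ i : (LaurentSeries (Polynomial A))ˣ) :
          LaurentSeries (Polynomial A)).coeff (k - (n:ℤ) * i)).coeff d) 0 with h0 | h0
      · rw [h0, mul_zero]
      · exfalso
        have := Pp_V m hm i _ d h0
        apply hi
        have : (n:ℤ) * i = (n:ℤ) * i0 := by omega
        exact mul_left_cancel₀ hn0 this
  · rw [if_neg h]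
    apply finsum_eq_zero_of_forall_eq_zero
    intro i
    rcases eq_or_ne ((((u0Unit (A := A) m hm ^ i : (LaurentSeries (Polynomial A))ˣ) :
        LaurentSeries (Polynomial A)).coeff (k - (n:ℤ) * i)).coeff d) 0 with h0 | h0
    · rw [h0, mul_zero]
    · exfalso
      have := Pp_V m hm i _ d h0
      exact h ⟨i, by omega⟩

lemma prod_coeff_d {m n : ℕ} (hm : 1 ≤ m) (hn : 1 ≤ n) (x y : LaurentSeries A) (k : ℤ) (d : ℕ) :
    ((iotaF A n x * sigmaF A m n y).coeff k).coeff d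
      = if (n:ℤ) ∣ (k - (m:ℤ) * d) then
          (x * Dmap d y).coeff ((k - (m:ℤ) * d) / (n:ℤ)) else 0 := by
  have hn0 : ((n:ℤ)) ≠ 0 := Int.natCast_ne_zero.mpr (by omega)
  rw [HahnSeries.coeff_mul, Polynomial.finset_sum_coeff]
  by_cases h : (n:ℤ) ∣ (k - (m:ℤ) * d)
  · rw [if_pos h]
    set e := (k - (m:ℤ) * d) / (n:ℤ) with he
    have hne : (n:ℤ) * e = k - (m:ℤ) * d := Int.mul_ediv_cancel' h
    conv_rhs => rw [HahnSeries.coeff_mul]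
    refine Finset.sum_bij_ne_zero
      (fun pq _ _ => (pq.1 / (n:ℤ), (pq.2 - (m:ℤ) * d) / (n:ℤ))) ?_ ?_ ?_ ?_
    · rintro ⟨p, q⟩ h₁ h₂
      rw [Finset.mem_addAntidiagonal] at h₁
      obtain ⟨hps, hqs, hpq⟩ := h₁
      have hp : (n:ℤ) ∣ p := by
        by_contra hp
        rw [iotaF_coeff hn, if_neg hp, zero_mul, Polynomial.coeff_zero] at h₂
        exact h₂ rfl
      rw [iotaF_coeff hn, if_pos hp, Polynomial.coeff_C_mul, sigma_coeff_d hm hn] at h₂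
      have hq : (n:ℤ) ∣ (q - (m:ℤ) * d) := by
        by_contra hq
        rw [if_neg hq, mul_zero] at h₂
        exact h₂ rfl
      rw [if_pos hq] at h₂
      rw [Finset.mem_addAntidiagonal]
      refine ⟨?_, ?_, ?_⟩
      · exact left_ne_zero_of_mul h₂
      · show (Dmap d y).coeff ((q - (m:ℤ) * d) / (n:ℤ)) ≠ 0
        rw [Dmap_coeff]
        exact right_ne_zero_of_mul h₂
      · apply mul_left_cancel₀ hn0
        rw [mul_add, Int.mul_ediv_cancel' hp, Int.mul_ediv_cancel' hq, hne]
        omega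
    · rintro ⟨p₁, q₁⟩ h₁₁ h₁₂ ⟨p₂, q₂⟩ h₂₁ h₂₂ heq
      have hp₁ : (n:ℤ) ∣ p₁ := by
        by_contra hp
        rw [iotaF_coeff hn, if_neg hp, zero_mul, Polynomial.coeff_zero] at h₁₂
        exact h₁₂ rfl
      have hp₂ : (n:ℤ) ∣ p₂ := by
        by_contra hp
        rw [iotaF_coeff hn, if_neg hp, zero_mul, Polynomial.coeff_zero] at h₂₂
        exact h₂₂ rfl
      have hq₁ : (n:ℤ) ∣ (q₁ - (m:ℤ) * d) := by
        rw [iotaF_coeff hn, if_pos hp₁, Polynomial.coeff_C_mul, sigma_coeff_d hm hn] at h₁₂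
        by_contra hq
        rw [if_neg hq, mul_zero] at h₁₂
        exact h₁₂ rfl
      have hq₂ : (n:ℤ) ∣ (q₂ - (m:ℤ) * d) := by
        rw [iotaF_coeff hn, if_pos hp₂, Polynomial.coeff_C_mul, sigma_coeff_d hm hn] at h₂₂
        by_contra hq
        rw [if_neg hq, mul_zero] at h₂₂
        exact h₂₂ rfl
      have e1 : p₁ / (n:ℤ) = p₂ / (n:ℤ) := congrArg Prod.fst heq
      have e2 : (q₁ - (m:ℤ) * d) / (n:ℤ) = (q₂ - (m:ℤ) * d) / (n:ℤ) := congrArg Prod.snd heq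
      have hp : p₁ = p₂ := by
        rw [← Int.mul_ediv_cancel' hp₁, ← Int.mul_ediv_cancel' hp₂, e1]
      have hq : q₁ = q₂ := by
        have h3 : (n:ℤ) * ((q₁ - (m:ℤ) * d) / (n:ℤ)) = (n:ℤ) * ((q₂ - (m:ℤ) * d) / (n:ℤ)) := by
          rw [e2]
        rw [Int.mul_ediv_cancel' hq₁, Int.mul_ediv_cancel' hq₂] at h3
        omega
      exact Prod.ext hp hq
    · rintro ⟨a, b⟩ hb hgb
      rw [Finset.mem_addAntidiagonal] at hb
      obtain ⟨has, hbs, hab⟩ := hb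
      have hxa : x.coeff a ≠ 0 := has
      have hdb : (Dmap d y).coeff b ≠ 0 := hbs
      refine ⟨((n:ℤ) * a, (n:ℤ) * b + (m:ℤ) * d), ?_, ?_, ?_⟩
      · rw [Finset.mem_addAntidiagonal]
        refine ⟨?_, ?_, ?_⟩
        · show (iotaF A n x).coeff ((n:ℤ) * a) ≠ 0
          rw [iotaF_coeff hn, if_pos (dvd_mul_right _ _), Int.mul_ediv_cancel_left _ hn0]
          intro hc
          rw [Polynomial.C_eq_zero] at hc
          exact hxa hc
        · show (sigmaF A m n y).coeff ((n:ℤ) * b + (m:ℤ) * d) ≠ 0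
          intro hc
          have hcd : ((sigmaF A m n y).coeff ((n:ℤ) * b + (m:ℤ) * d)).coeff d = 0 := by
            rw [hc, Polynomial.coeff_zero]
          rw [sigma_coeff_d hm hn] at hcd
          rw [if_pos (by simpa using dvd_mul_right (n:ℤ) b :
            (n:ℤ) ∣ ((n:ℤ) * b + (m:ℤ) * d - (m:ℤ) * d))] at hcd
          rw [show ((n:ℤ) * b + (m:ℤ) * d - (m:ℤ) * d) = (n:ℤ) * b by ring,
            Int.mul_ediv_cancel_left _ hn0] at hcd
          rw [Dmap_coeff] at hdb
          exact hdb hcd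
        · rw [show (n:ℤ) * a + ((n:ℤ) * b + (m:ℤ) * d) = (n:ℤ) * (a + b) + (m:ℤ) * d by ring,
            hab, hne]
          ring
      · rw [iotaF_coeff hn, if_pos (dvd_mul_right _ _), Int.mul_ediv_cancel_left _ hn0,
          Polynomial.coeff_C_mul, sigma_coeff_d hm hn]
        rw [if_pos (by simpa using dvd_mul_right (n:ℤ) b :
          (n:ℤ) ∣ ((n:ℤ) * b + (m:ℤ) * d - (m:ℤ) * d))]
        rw [show ((n:ℤ) * b + (m:ℤ) * d - (m:ℤ) * d) = (n:ℤ) * b by ring,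
          Int.mul_ediv_cancel_left _ hn0]
        rw [Dmap_coeff] at hgb
        exact hgb
      · have c1 : ((n:ℤ) * a) / (n:ℤ) = a := Int.mul_ediv_cancel_left _ hn0
        have c2 : ((n:ℤ) * b + (m:ℤ) * d - (m:ℤ) * d) / (n:ℤ) = b := by
          rw [show ((n:ℤ) * b + (m:ℤ) * d - (m:ℤ) * d) = (n:ℤ) * b by ring]
          exact Int.mul_ediv_cancel_left _ hn0
        exact Prod.ext c1 c2
    · rintro ⟨p, q⟩ h₁ h₂
      rw [Finset.mem_addAntidiagonal] at h₁
      obtain ⟨hps, hqs, hpq⟩ := h₁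
      have hp : (n:ℤ) ∣ p := by
        by_contra hp
        rw [iotaF_coeff hn, if_neg hp, zero_mul, Polynomial.coeff_zero] at h₂
        exact h₂ rfl
      rw [iotaF_coeff hn, if_pos hp, Polynomial.coeff_C_mul, sigma_coeff_d hm hn]
      have hq : (n:ℤ) ∣ (q - (m:ℤ) * d) := by
        rw [iotaF_coeff hn, if_pos hp, Polynomial.coeff_C_mul, sigma_coeff_d hm hn] at h₂
        by_contra hq
        rw [if_neg hq, mul_zero] at h₂
        exact h₂ rfl
      rw [if_pos hq]
      show _ = x.coeff (p / (n:ℤ)) * (Dmap d y).coeff ((q - (m:ℤ) * d) / (n:ℤ))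
      rw [Dmap_coeff]
  · rw [if_neg h]
    apply Finset.sum_eq_zero
    rintro ⟨p, q⟩ hmem
    rw [Finset.mem_addAntidiagonal] at hmem
    by_cases hp : (n:ℤ) ∣ p
    · rw [iotaF_coeff hn, if_pos hp, Polynomial.coeff_C_mul, sigma_coeff_d hm hn, if_neg, mul_zero]
      intro hq
      apply h
      have hk : k - (m:ℤ) * d = p + (q - (m:ℤ) * d) := by
        have := hmem.2.2
        omega
      rw [hk]
      exact dvd_add hp hq
    · rw [iotaF_coeff hn, if_neg hp, zero_mul, Polynomial.coeff_zero]

def coeffHom (k : ℤ) : LaurentSeries (Polynomial A) →+ Polynomial A where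
  toFun z := z.coeff k
  map_zero' := rfl
  map_add' _ _ := rfl

def coeffHomA (k : ℤ) : LaurentSeries A →+ A where
  toFun z := z.coeff k
  map_zero' := rfl
  map_add' _ _ := rfl

variable (N) in
/-- The matrices `F_d` appearing as `u^d`-slices. -/
def Fmat (g : Matrix (Fin N) (Fin N) (LaurentSeries A)) (d : ℕ) :
    Matrix (Fin N) (Fin N) (LaurentSeries A) :=
  Matrix.of fun i j => ∑ l, g.adjugate i l * Dmap d (g l j)

lemma hmat_coeff_d {m n : ℕ} (hm : 1 ≤ m) (hn : 1 ≤ n)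
    {g : Matrix (Fin N) (Fin N) (LaurentSeries A)} (hdet : g.det = 1)
    (i j : Fin N) (k : ℤ) (d : ℕ) :
    ((hmat g m n i j).coeff k).coeff d
      = if (n:ℤ) ∣ (k - (m:ℤ) * d) then
          (Fmat N g d i j).coeff ((k - (m:ℤ) * d) / (n:ℤ)) else 0 := by
  have h1 : hmat g m n i j = ∑ l, iotaF A n (g.adjugate i l) * sigmaF A m n (g l j) := by
    rw [hmat, map_iota_inv hn hdet, Matrix.mul_apply]
    simp only [Matrix.map_apply]
  rw [h1]
  have h2 : (∑ l, iotaF A n (g.adjugate i l) * sigmaF A m n (g l j)).coeff k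
      = ∑ l, (iotaF A n (g.adjugate i l) * sigmaF A m n (g l j)).coeff k :=
    map_sum (coeffHom (A := A) k) _ Finset.univ
  rw [h2, Polynomial.finset_sum_coeff]
  rw [Finset.sum_congr rfl (fun l _ => prod_coeff_d hm hn (g.adjugate i l) (g l j) k d)]
  by_cases h : (n:ℤ) ∣ (k - (m:ℤ) * d)
  · simp only [if_pos h]
    have h3 : (Fmat N g d i j).coeff ((k - (m:ℤ) * d) / (n:ℤ))
        = ∑ l, (g.adjugate i l * Dmap d (g l j)).coeff ((k - (m:ℤ) * d) / (n:ℤ)) := by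
      show (∑ l, g.adjugate i l * Dmap d (g l j)).coeff _ = _
      exact map_sum (coeffHomA (A := A) ((k - (m:ℤ) * d) / (n:ℤ))) _ Finset.univ
    rw [h3]
  · simp only [if_neg h, Finset.sum_const_zero]

lemma Fmat_zero_apply {g : Matrix (Fin N) (Fin N) (LaurentSeries A)} (hdet : g.det = 1)
    (i j : Fin N) :
    Fmat N g 0 i j = (1 : Matrix (Fin N) (Fin N) (LaurentSeries A)) i j := by
  show (∑ l, g.adjugate i l * Dmap 0 (g l j)) = _
  simp only [Dmap_zero_eq]
  rw [← Matrix.mul_apply, Matrix.adjugate_mul, hdet, one_smul]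

lemma Fmat_PS {g : Matrix (Fin N) (Fin N) (LaurentSeries A)} (hdet : g.det = 1)
    (hidx : SigmaSet g = {q : ℚ | 0 < q}) (d : ℕ) (hd : 1 ≤ d) (i j : Fin N) :
    ∀ e : ℤ, e < 0 → (Fmat N g d i j).coeff e = 0 := by
  intro e he
  have hqpos : (0:ℚ) < Rat.mk' 1 (d+1) (by omega) (Nat.coprime_one_left _) := by
    rw [← Rat.num_pos]
    norm_num
  have hset : (Rat.mk' 1 (d+1) (by omega) (Nat.coprime_one_left _)) ∈ SigmaSet g := by
    rw [hidx]
    exact hqpos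
  have hps : IsPS (hmat g 1 (d + 1) i j) := hset.2 i j
  have hk : ((d:ℤ)+1) * e + (d:ℤ) < 0 := by nlinarith
  have h0 := hps (((d:ℤ)+1) * e + (d:ℤ)) hk
  have hmaster := hmat_coeff_d (m := 1) (n := d+1) le_rfl (by omega) hdet i j
    (((d:ℤ)+1) * e + (d:ℤ)) d
  rw [h0, Polynomial.coeff_zero] at hmaster
  have hcond : ((d + 1 : ℕ) : ℤ) ∣ (((d:ℤ)+1) * e + (d:ℤ) - ((1:ℕ):ℤ) * (d:ℤ)) := by
    push_cast
    exact ⟨e, by ring⟩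
  rw [if_pos hcond] at hmaster
  have hquot : ((((d:ℤ)+1) * e + (d:ℤ) - ((1:ℕ):ℤ) * (d:ℤ)) / ((d + 1 : ℕ) : ℤ)) = e := by
    push_cast
    rw [show ((d:ℤ)+1) * e + (d:ℤ) - 1 * (d:ℤ) = ((d:ℤ)+1) * e by ring]
    exact Int.mul_ediv_cancel_left _ (by omega)
  rw [hquot] at hmaster
  exact hmaster.symm

end Aux

/-- If `g ∉ SL_N(A[[t]])` has index `r(g) = 0`, then for all integers
`s₀ ≥ M ≥ 1` the entries of `ι_1(g)⁻¹ σ_{s₀,1}(g) - I` lie in `s^M (A[u])[[s]]`. -/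
theorem statement5 {A : Type*} [CommRing A] {N : ℕ} (hN : 1 ≤ N)
    (g : Matrix (Fin N) (Fin N) (LaurentSeries A)) (hdet : g.det = 1)
    (hg : ¬ ∀ i j, IsPS (g i j))
    (hidx : SigmaSet g = {q : ℚ | 0 < q}) :
    ∀ s₀ M : ℕ, 1 ≤ M → M ≤ s₀ → ∀ i j, ∀ k : ℤ, k < (M : ℤ) →
      ((hmat g s₀ 1 - 1) i j).coeff k = 0 := by
  intro s₀ M hM hMs i j k hk
  have hs₀ : 1 ≤ s₀ := le_trans hM hMs
  rw [Matrix.sub_apply, HahnSeries.coeff_sub, sub_eq_zero]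
  ext d
  have hcond : ((1:ℕ):ℤ) ∣ (k - (s₀:ℤ) * d) := by push_cast; exact one_dvd _
  have hquot : (k - (s₀:ℤ) * d) / ((1:ℕ):ℤ) = k - (s₀:ℤ) * d := by
    push_cast; exact Int.ediv_one _
  rw [hmat_coeff_d hs₀ le_rfl hdet i j k d, if_pos hcond, hquot]
  rcases Nat.eq_zero_or_pos d with rfl | hd
  · rw [Fmat_zero_apply hdet i j, Nat.cast_zero, mul_zero, sub_zero]
    by_cases hij : i = j
    · subst hij
      rw [Matrix.one_apply_eq, Matrix.one_apply_eq, HahnSeries.coeff_one, HahnSeries.coeff_one]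
      by_cases hk0 : k = 0
      · rw [if_pos hk0, if_pos hk0, Polynomial.coeff_one_zero]
      · rw [if_neg hk0, if_neg hk0, Polynomial.coeff_zero]
    · rw [Matrix.one_apply_ne hij, Matrix.one_apply_ne hij, HahnSeries.coeff_zero,
        HahnSeries.coeff_zero, Polynomial.coeff_zero]
  · have hneg : k - (s₀:ℤ) * d < 0 := by
      have h1 : (s₀:ℤ) ≤ (s₀:ℤ) * d :=
        le_mul_of_one_le_right (by positivity) (by exact_mod_cast hd)
      have h2 : (M:ℤ) ≤ (s₀:ℤ) := by exact_mod_cast hMs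
      linarith
    rw [Fmat_PS hdet hidx d hd i j _ hneg]
    by_cases hij : i = j
    · subst hij
      rw [Matrix.one_apply_eq, HahnSeries.coeff_one]
      by_cases hk0 : k = 0
      · rw [if_pos hk0, Polynomial.coeff_one, if_neg (by omega)]
      · rw [if_neg hk0, Polynomial.coeff_zero]
    · rw [Matrix.one_apply_ne hij, HahnSeries.coeff_zero, Polynomial.coeff_zero]

end ResidueIndex

end
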